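/- arXiv:1606.05982 — 5 statements merged into one kernel-verified Lean document; each statement's English description precedes it below -/
import Mathlib

section
/- Let G be a finite directed graph (no self-loops, no parallel arcs) on vertex set V. If every induced subgraph of G on 3 vertices contains a directed cycle, then every induced subgraph of G on 4 vertices contains a pair of vertices i ≠ j with both arcs (i→j) and (j→i) present. -/
/-!
Suppose four vertices span no pair of opposite arcs. Fix one of them, `a`; by pigeonhole two of
the other three, `x` and `y`, are both out-neighbours or both non-out-neighbours of `a`. In the
first case `a` has no in-neighbour in `{a, x, y}`, in the second no out-neighbour, so a directed
cycle in `{a, x, y}` cannot pass through `a` and lives on `{x, y}`, where it must be the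
forbidden pair `x → y → x`.
-/

/-- There is a directed cycle of `A` all of whose vertices lie in `S`. -/
def HasCycleIn {V : Type} (A : V → V → Prop) (S : Set V) : Prop :=
  ∃ (v : V) (l : List V), (v :: l).Nodup ∧ (∀ x ∈ v :: l, x ∈ S) ∧
    List.Chain A v (l ++ [v])

section

variable {V : Type} {A : V → V → Prop}

theorem List.IsChain.exists_rel_of_mem_tail {v s : V} {m : List V}
    (h : (v :: m).IsChain A) (hs : s ∈ m) : ∃ t ∈ v :: m, A t s := by
  induction m generalizing v with
  | nil => simp at hs
  | cons x m ih =>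
    rw [List.isChain_cons_cons] at h
    rcases List.mem_cons.mp hs with rfl | hs
    · exact ⟨v, List.mem_cons_self, h.1⟩
    · obtain ⟨t, ht, hts⟩ := ih h.2 hs
      exact ⟨t, List.mem_cons_of_mem _ ht, hts⟩

theorem HasCycleIn.flip {S : Set V} (h : HasCycleIn A S) : HasCycleIn (_root_.flip A) S := by
  obtain ⟨v, l, hnd, hS, hchain⟩ := h
  refine ⟨v, l.reverse, ?_, ?_, ?_⟩
  · simpa using hnd
  · simpa using hS
  · have hrev : (v :: (l ++ [v])).reverse = v :: (l.reverse ++ [v]) := by simp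
    change List.IsChain (_root_.flip A) (v :: (l.reverse ++ [v]))
    rw [← hrev, List.isChain_reverse]
    exact hchain

theorem HasCycleIn.exists_in_closed {S : Set V} (h : HasCycleIn A S) :
    ∃ T ⊆ S, T.Nonempty ∧ ∀ s ∈ T, ∃ t ∈ T, A t s := by
  obtain ⟨v, l, -, hS, hchain⟩ := h
  refine ⟨{x | x ∈ v :: l}, hS, ⟨v, List.mem_cons_self⟩, fun s hs => ?_⟩
  have hcycle_mem {u : V} : u ∈ l ++ [v] ↔ u ∈ v :: l := by simp [or_comm]
  obtain ⟨t, ht, hts⟩ := List.IsChain.exists_rel_of_mem_tail hchain (hcycle_mem.mpr hs)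
  refine ⟨t, ?_, hts⟩
  rcases List.mem_cons.mp ht with rfl | ht
  exacts [List.mem_cons_self, hcycle_mem.mp ht]

theorem rel_and_rel_of_hasCycleIn_triple {a x y : V} (hirr : ∀ i, ¬ A i i)
    (h : HasCycleIn A {a, x, y}) (ha : ∀ t ∈ ({a, x, y} : Set V), ¬ A t a) :
    A x y ∧ A y x := by
  obtain ⟨T, hTS, ⟨s, hs⟩, hT⟩ := h.exists_in_closed
  have hTxy : ∀ u ∈ T, u = x ∨ u = y := by
    intro u hu
    obtain ⟨t, ht, htu⟩ := hT u hu
    exact (hTS hu).resolve_left fun hua => ha t (hTS ht) (hua ▸ htu)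
  obtain ⟨t, ht, hts⟩ := hT s hs
  obtain ⟨u, hu, hut⟩ := hT t ht
  have hst : s ≠ t := fun hst => hirr s (hst ▸ hts)
  have htu : t ≠ u := fun htu => hirr t (htu ▸ hut)
  rcases hTxy s hs with rfl | rfl <;> rcases hTxy t ht with rfl | rfl <;>
    rcases hTxy u hu with rfl | rfl <;> tauto

theorem Finset.exists_ne_ne_and_iff_of_three_lt_card [DecidableEq V] {S : Finset V}
    (hS : 3 < S.card) (a : V) (P : V → Prop) :
    ∃ x ∈ S, ∃ y ∈ S, a ≠ x ∧ a ≠ y ∧ x ≠ y ∧ (P x ↔ P y) := by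
  have hcard : (Finset.univ : Finset Prop).card < (S.erase a).card := by
    have := Finset.pred_card_le_card_erase (s := S) (a := a)
    simp only [Finset.card_univ, Fintype.card_prop]
    omega
  obtain ⟨x, hx, y, hy, hxy, hPxy⟩ :=
    Finset.exists_ne_map_eq_of_card_lt_of_maps_to hcard (f := P) (fun _ _ => by simp [em])
  rw [Finset.mem_erase] at hx hy
  exact ⟨x, hx.2, y, hy.2, hx.1.symm, hy.1.symm, hxy, iff_of_eq hPxy⟩

end

theorem four_vertices_contain_edge_general {V : Type} [DecidableEq V]
    (A : V → V → Prop) (hirr : ∀ i, ¬ A i i)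
    (h3 : ∀ S : Finset V, S.card = 3 → HasCycleIn A ↑S) :
    ∀ S : Finset V, S.card = 4 →
      ∃ i ∈ S, ∃ j ∈ S, i ≠ j ∧ A i j ∧ A j i := by
  intro S hS
  by_contra! hne
  obtain ⟨a, ha⟩ := Finset.card_pos.mp (by omega : 0 < S.card)
  obtain ⟨x, hx, y, hy, hax, hay, hxy, hAxy⟩ :=
    S.exists_ne_ne_and_iff_of_three_lt_card (by omega) a (A a)
  have hcyc : HasCycleIn A {a, x, y} := by
    simpa using h3 {a, x, y} (Finset.card_eq_three.mpr ⟨a, x, y, hax, hay, hxy, rfl⟩)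
  by_cases hAx : A a x
  · have hsrc : ∀ t ∈ ({a, x, y} : Set V), ¬ A t a := by
      rintro t (rfl | rfl | rfl)
      exacts [hirr t, hne a ha t hx hax hAx, hne a ha t hy hay (hAxy.mp hAx)]
    obtain ⟨hxy', hyx'⟩ := rel_and_rel_of_hasCycleIn_triple hirr hcyc hsrc
    exact hne x hx y hy hxy hxy' hyx'
  · have hsink : ∀ t ∈ ({a, x, y} : Set V), ¬ flip A t a := by
      rintro t (rfl | rfl | rfl)
      exacts [hirr t, hAx, mt hAxy.mpr hAx]
    obtain ⟨hyx', hxy'⟩ := rel_and_rel_of_hasCycleIn_triple (A := flip A) hirr hcyc.flip hsink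
    exact hne x hx y hy hxy hxy' hyx'

/-- If every induced subgraph of a finite directed graph (no self-loops) on 3 vertices
contains a directed cycle, then every induced subgraph on 4 vertices contains a pair
of vertices joined by arcs in both directions. -/
theorem four_vertices_contain_edge {V : Type} [Fintype V] [DecidableEq V]
    (A : V → V → Prop) (hirr : ∀ i, ¬ A i i)
    (h3 : ∀ S : Finset V, S.card = 3 → HasCycleIn A ↑S) :
    ∀ S : Finset V, S.card = 4 →
      ∃ i ∈ S, ∃ j ∈ S, i ≠ j ∧ A i j ∧ A j i :=
  four_vertices_contain_edge_general A hirr h3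
end

section
/- Let G be a finite directed graph in which every cycle of G intersects a fixed directed cycle C₁. Then every arc of G whose endpoints all lie on some directed cycle and which is not an arc of C₁ lies on a path that starts at a vertex of C₁, ends at a vertex of C₁, and whose internal vertices and arcs are disjoint from C₁. -/
/-!
Walk around a cycle through `x` from a vertex of `C₁` to `x`, take the arc `x → y`, and continue
around a cycle through `y` until it meets `C₁`. Cutting this walk at the last vertex of `C₁` before
`x` and the first one after `y` leaves a walk whose interior avoids `C₁`; an arc of it with both
ends on `C₁` must then join its two ends directly, so it is `x → y`, which is not an arc of `C₁`.
-/

/-- The cyclically-consecutive pairs of a list: `(c i, c (i+1 mod n))` for all `i`. -/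
def cyclicPairs {V : Type} (c : List V) : List (V × V) := c.zip (c.rotate 1)

/-- `d` is (the vertex list of) a directed cycle of the graph `A`: it is nonempty,
has no repeated vertices, and every cyclically-consecutive pair is an arc. -/
def IsCycleList {V : Type} (A : V → V → Prop) (d : List V) : Prop :=
  d ≠ [] ∧ d.Nodup ∧ ∀ pr ∈ cyclicPairs d, A pr.1 pr.2

open Relation

namespace List

variable {α : Type*} {R S : α → α → Prop}

theorem isChain_iff_forall_mem_zip_tail {l : List α} :
    IsChain R l ↔ ∀ pr ∈ l.zip l.tail, R pr.1 pr.2 := by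
  induction l using twoStepInduction with
  | nil | singleton => simp
  | cons_cons a b l _ ih => simp [isChain_cons_cons, ih]

theorem IsChain.imp_of_mem_dropLast_imp {l : List α}
    (H : ∀ a b : α, a ∈ l.dropLast → b ∈ l → R a b → S a b) (p : IsChain R l) :
    IsChain S l := by
  induction p with grind

theorem mem_zip_tail_append_cons_cons (l₁ l₂ : List α) (x y : α) :
    (x, y) ∈ (l₁ ++ x :: y :: l₂).zip (l₁ ++ x :: y :: l₂).tail := by
  have : ¬ (l₁ ++ x :: y :: l₂).IsChain fun u v => (u, v) ≠ (x, y) := by simp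
  simpa [isChain_iff_forall_mem_zip_tail] using this

end List

section Cycles

variable {V : Type} {A : V → V → Prop}

theorem mem_of_mem_cyclicPairs {c : List V} {pr : V × V} (h : pr ∈ cyclicPairs c) :
    pr.1 ∈ c ∧ pr.2 ∈ c :=
  ⟨(List.of_mem_zip h).1, List.mem_rotate.1 (List.of_mem_zip h).2⟩

theorem cycle_chain_of_forall_mem_cyclicPairs {d : List V}
    (h : ∀ pr ∈ cyclicPairs d, A pr.1 pr.2) : Cycle.Chain A (d : Cycle V) := by
  cases d with
  | nil => trivial
  | cons a t =>
    rw [Cycle.chain_coe_cons, List.isChain_iff_forall_mem_zip_tail]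
    have hzip : (a :: (t ++ [a])).zip (t ++ [a]) = cyclicPairs (a :: t) := by
      simpa [cyclicPairs] using List.zip_append (l₁ := a :: t) (r₁ := [a]) (l₂ := t ++ [a])
        (r₂ := []) (by simp)
    simpa [hzip] using h

theorem reflTransGen_of_forall_mem_cyclicPairs {d : List V}
    (h : ∀ pr ∈ cyclicPairs d, A pr.1 pr.2) {u v : V} (hu : u ∈ d) (hv : v ∈ d) :
    ReflTransGen A u v :=
  Cycle.chain_iff_pairwise.1 ((cycle_chain_of_forall_mem_cyclicPairs h).imp fun _ _ => .single)
    u (Cycle.mem_coe_iff.2 hu) v (Cycle.mem_coe_iff.2 hv)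

end Cycles

section OuterPaths

variable {V : Type} {A : V → V → Prop} {S : Set V}

theorem exists_isChain_from_mem_avoiding {a x : V} (h : ReflTransGen A a x) (ha : a ∈ S) :
    ∃ a' ∈ S, ∃ s : List V,
      (∀ v ∈ s, v ∉ S) ∧ (a' :: s).IsChain A ∧ (a' :: s).getLast? = some x := by
  induction h with
  | refl => exact ⟨a, ha, [], by simp, .singleton a, rfl⟩
  | @tail _ x _ hwx ih =>
    obtain ⟨a', ha', s, hs, hchain, hlast⟩ := ih
    by_cases hx : x ∈ S
    · exact ⟨x, hx, [], by simp, .singleton x, rfl⟩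
    · refine ⟨a', ha', s ++ [x], ?_, ?_, by rw [← List.cons_append, List.getLast?_concat]⟩
      · simpa [or_imp, forall_and] using ⟨hs, hx⟩
      · rw [← List.cons_append]
        exact hchain.append (.singleton x) (by simpa [hlast] using hwx)

theorem exists_isChain_to_mem_avoiding {y b : V} (h : ReflTransGen A y b) (hb : b ∈ S) :
    ∃ b' ∈ S, ∃ t : List V,
      (∀ v ∈ t, v ∉ S) ∧ (t ++ [b']).IsChain A ∧ (t ++ [b']).head? = some y := by
  induction h using ReflTransGen.head_induction_on with
  | refl => exact ⟨b, hb, [], by simp, .singleton b, rfl⟩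
  | @head y _ hyz _ ih =>
    obtain ⟨b', hb', t, ht, hchain, hhead⟩ := ih
    by_cases hy : y ∈ S
    · exact ⟨y, hy, [], by simp, .singleton y, rfl⟩
    · refine ⟨b', hb', y :: t, ?_, ?_, rfl⟩
      · simpa [or_imp, forall_and] using ⟨hy, ht⟩
      · exact hchain.cons (by simpa [hhead] using hyz)

theorem exists_outer_path_through_arc {E : Set (V × V)} (hE : ∀ pr ∈ E, pr.1 ∈ S ∧ pr.2 ∈ S)
    {x y : V} (hxy : A x y) (hxyE : (x, y) ∉ E)
    (hx : ∃ a ∈ S, ReflTransGen A a x) (hy : ∃ b ∈ S, ReflTransGen A y b) :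
    ∃ p : List V, 2 ≤ p.length ∧ p.IsChain A ∧
      (∀ a, p.head? = some a → a ∈ S) ∧
      (∀ b, p.getLast? = some b → b ∈ S) ∧
      (∀ v ∈ p, p.head? ≠ some v → p.getLast? ≠ some v → v ∉ S) ∧
      (∀ pr ∈ p.zip p.tail, pr ∉ E) ∧
      (x, y) ∈ p.zip p.tail := by
  obtain ⟨a₀, ha₀, hax⟩ := hx
  obtain ⟨b₀, hb₀, hyb⟩ := hy
  obtain ⟨a, ha, s, hs, hchain_s, hlast⟩ := exists_isChain_from_mem_avoiding hax ha₀
  obtain ⟨b, hb, t, ht, hchain_t, hhead⟩ := exists_isChain_to_mem_avoiding hyb hb₀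
  have bridge {R : V → V → Prop} (h : R x y) :
      ∀ u ∈ (a :: s).getLast?, ∀ v ∈ (t ++ [b]).head?, R u v := by
    simpa [hlast, hhead] using h
  have hsplit : ∃ l₁ l₂, (a :: s) ++ (t ++ [b]) = l₁ ++ x :: y :: l₂ := by
    obtain ⟨l₁, hl₁⟩ := List.getLast?_eq_some_iff.1 hlast
    obtain ⟨l₂, hl₂⟩ := List.head?_eq_some_iff.1 hhead
    exact ⟨l₁, l₂, by rw [hl₁, hl₂]; simp⟩
  have hp_last : ((a :: s) ++ (t ++ [b])).getLast? = some b := by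
    rw [← List.append_assoc, List.getLast?_concat]
  refine ⟨(a :: s) ++ (t ++ [b]), ?_, hchain_s.append hchain_t (bridge hxy), by simpa using ha,
    fun _ h => Option.some.inj (hp_last.symm.trans h) ▸ hb, ?_, ?_, ?_⟩
  · simp only [List.cons_append, List.length_cons, List.length_append]
    omega
  · intro v hv hv_head hv_last
    simp only [List.cons_append, List.mem_cons, List.mem_append, List.not_mem_nil, or_false] at hv
    rcases hv with rfl | hv | hv | rfl
    · exact absurd rfl hv_head
    · exact hs v hv
    · exact ht v hv
    · exact absurd hp_last hv_last
  · rw [← List.isChain_iff_forall_mem_zip_tail (R := fun u v => (u, v) ∉ E)]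
    refine .append (hchain_s.imp_of_mem_tail_imp ?_) (hchain_t.imp_of_mem_dropLast_imp ?_)
      (bridge hxyE)
    · exact fun u v _ hv _ huv => hs v hv (hE _ huv).2
    · intro u v hu _ _ huv
      exact ht u (by simpa using hu) (hE _ huv).1
  · obtain ⟨l₁, l₂, hl⟩ := hsplit
    rw [hl]
    exact List.mem_zip_tail_append_cons_cons l₁ l₂ x y

end OuterPaths

theorem arc_on_outer_path_general {V : Type} (A : V → V → Prop)
    (c : List V)
    (hmeet : ∀ d : List V, IsCycleList A d → ∃ v ∈ d, v ∈ c)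
    (x y : V) (hxy : A x y)
    (hx : ∃ d, IsCycleList A d ∧ x ∈ d)
    (hy : ∃ d, IsCycleList A d ∧ y ∈ d)
    (hnot : (x, y) ∉ cyclicPairs c) :
    ∃ p : List V, 2 ≤ p.length ∧ List.Chain' A p ∧
      (∀ a, p.head? = some a → a ∈ c) ∧
      (∀ b, p.getLast? = some b → b ∈ c) ∧
      (∀ v ∈ p, p.head? ≠ some v → p.getLast? ≠ some v → v ∉ c) ∧
      (∀ pr ∈ p.zip p.tail, pr ∉ cyclicPairs c) ∧
      (x, y) ∈ p.zip p.tail := by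
  obtain ⟨dx, hdx, hx_dx⟩ := hx
  obtain ⟨dy, hdy, hy_dy⟩ := hy
  obtain ⟨u, hu_dx, hu_c⟩ := hmeet dx hdx
  obtain ⟨w, hw_dy, hw_c⟩ := hmeet dy hdy
  exact exists_outer_path_through_arc (S := {v | v ∈ c}) (E := {pr | pr ∈ cyclicPairs c})
    (fun _ => mem_of_mem_cyclicPairs) hxy hnot
    ⟨u, hu_c, reflTransGen_of_forall_mem_cyclicPairs hdx.2.2 hu_dx hx_dx⟩
    ⟨w, hw_c, reflTransGen_of_forall_mem_cyclicPairs hdy.2.2 hy_dy hw_dy⟩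

/-- Proposition 5: if every directed cycle of `G` intersects a fixed directed cycle `c`,
then every arc `(x → y)` with both endpoints lying on some directed cycle, and which is
not an arc of `c`, lies on a path that starts and ends at vertices of `c` and whose
internal vertices and arcs are disjoint from `c`. -/
theorem arc_on_outer_path {V : Type} [Fintype V] (A : V → V → Prop)
    (c : List V) (hc : IsCycleList A c)
    (hmeet : ∀ d : List V, IsCycleList A d → ∃ v ∈ d, v ∈ c)
    (x y : V) (hxy : A x y)
    (hx : ∃ d, IsCycleList A d ∧ x ∈ d)
    (hy : ∃ d, IsCycleList A d ∧ y ∈ d)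
    (hnot : (x, y) ∉ cyclicPairs c) :
    ∃ p : List V, 2 ≤ p.length ∧ List.Chain' A p ∧
      (∀ a, p.head? = some a → a ∈ c) ∧
      (∀ b, p.getLast? = some b → b ∈ c) ∧
      (∀ v ∈ p, p.head? ≠ some v → p.getLast? ≠ some v → v ∉ c) ∧
      (∀ pr ∈ p.zip p.tail, pr ∉ cyclicPairs c) ∧
      (x, y) ∈ p.zip p.tail :=
  arc_on_outer_path_general A c hmeet x y hxy hx hy hnot
end

section
/- Let G be a directed graph consisting of a directed cycle C₁ with vertices labeled 1,2,...,L in cyclic arc order, together with outer paths (paths starting and ending on C₁ with internal vertices off C₁). Remove vertex 1. Then the remaining graph contains a directed cycle if and only if there exists an outer path from some vertex b ∈ V(C₁)\{1} to some vertex c ∈ V(C₁)\{1} with b ≥ c (in the cyclic labeling). -/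
/-- `p` is an outer path of the graph `A` relative to the cycle with vertex set `C`
and arc relation `carc`: a directed path of length ≥ 1 from `u ∈ C` to `w ∈ C`
whose internal vertices are off `C` and whose arcs are not arcs of the cycle. -/
def OuterPath {V : Type} (A : V → V → Prop) (C : Set V) (carc : V → V → Prop)
    (p : List V) (u w : V) : Prop :=
  2 ≤ p.length ∧ p.head? = some u ∧ p.getLast? = some w ∧ u ∈ C ∧ w ∈ C ∧
    List.Chain' A p ∧ (∀ v ∈ p, v ≠ u → v ≠ w → v ∉ C) ∧
    ∀ pr ∈ p.zip p.tail, ¬ carc pr.1 pr.2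

/-! Removing `c 0` leaves the cycle arcs `c 1 → c 2 → ⋯ → c (L-1)`, all going forward.
A backward outer path from `c b` to `c e` (`e ≤ b`) closes up with the arcs `c e → ⋯ → c b` into
a closed walk avoiding `c 0`, and every closed walk contains a cycle. Conversely, a cycle avoiding
`c 0` meets `C₁`; cut it at its visits to `C₁`. Each piece is a cycle arc `c i → c (i + 1)` with
`i + 1 ≠ 0`, or an outer path; if no outer path goes backward, every piece strictly increases the
index, which is impossible around a cycle. -/

open List

section CycleLists

variable {V : Type} {A : V → V → Prop}

theorem cyclicPairs_cons (x : V) (s : List V) :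
    cyclicPairs (x :: s) = (x :: s).zip (s ++ [x]) := by
  simp [cyclicPairs, rotate_cons_succ]

theorem cyclicPairs_rotate (d : List V) (n : ℕ) :
    cyclicPairs (d.rotate n) = (cyclicPairs d).rotate n := by
  unfold cyclicPairs
  rw [rotate_rotate, Nat.add_comm n 1, ← rotate_rotate]
  exact (zipWith_rotate_distrib Prod.mk d (d.rotate 1) n (by simp)).symm

theorem isCycleList_cons_iff {x : V} {s : List V} :
    IsCycleList A (x :: s) ↔ (x :: s).Nodup ∧ List.IsChain A (x :: s ++ [x]) := by
  rw [IsCycleList, cyclicPairs_cons, isChain_cons_append_singleton_iff_forall₂, forall₂_iff_zip]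
  simp

theorem IsCycleList.rotate {d : List V} (h : IsCycleList A d) (n : ℕ) :
    IsCycleList A (d.rotate n) := by
  obtain ⟨hne, hnd, harcs⟩ := h
  refine ⟨by simpa using hne, nodup_rotate.2 hnd, fun pr hpr => harcs pr ?_⟩
  rw [cyclicPairs_rotate] at hpr
  exact mem_rotate.1 hpr

theorem IsCycleList.exists_isChain_of_mem {d : List V} (h : IsCycleList A d) {v : V}
    (hv : v ∈ d) : ∃ s, List.IsChain A (v :: s ++ [v]) ∧ ∀ u ∈ s, u ∈ d := by
  obtain ⟨l₁, l₂, rfl⟩ := append_of_mem hv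
  have hrot := h.rotate l₁.length
  rw [rotate_append_length_eq] at hrot
  exact ⟨l₂ ++ l₁, (isCycleList_cons_iff.1 hrot).2, fun u hu => by
    simp only [mem_append, mem_cons] at hu ⊢; tauto⟩

theorem exists_eq_append_cons_append_cons_of_not_nodup {α : Type*} :
    ∀ {l : List α}, ¬ l.Nodup → ∃ y l₁ l₂ l₃, l = l₁ ++ y :: l₂ ++ y :: l₃
  | [], h => absurd nodup_nil h
  | a :: t, h => by
    by_cases ha : a ∈ t
    · obtain ⟨l₂, l₃, rfl⟩ := append_of_mem ha
      exact ⟨a, [], l₂, l₃, rfl⟩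
    · obtain ⟨y, l₁, l₂, l₃, rfl⟩ :=
        exists_eq_append_cons_append_cons_of_not_nodup fun ht => h (nodup_cons.2 ⟨ha, ht⟩)
      exact ⟨y, a :: l₁, l₂, l₃, rfl⟩

theorem exists_isCycleList_of_isChain {x : V} {s : List V} (h : List.IsChain A (x :: s ++ [x])) :
    ∃ d, IsCycleList A d ∧ ∀ v ∈ d, v ∈ x :: s := by
  induction hn : s.length using Nat.strong_induction_on generalizing x s with
  | _ n ih =>
  by_cases hnd : (x :: s).Nodup
  · exact ⟨x :: s, isCycleList_cons_iff.2 ⟨hnd, h⟩, fun _ => id⟩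
  -- a repeated vertex `y` cuts out a shorter closed walk `y :: l₂ ++ [y]`
  obtain ⟨y, l₁, l₂, l₃, hsplit⟩ := exists_eq_append_cons_append_cons_of_not_nodup hnd
  have hinf : y :: l₂ ++ [y] <:+: x :: s ++ [x] := ⟨l₁, l₃ ++ [x], by
    rw [hsplit]; simp⟩
  have hlen : l₂.length < n := by
    have := congrArg length hsplit
    simp only [length_cons, length_append] at this
    omega
  obtain ⟨d, hd, hdsub⟩ := ih _ hlen (h.infix hinf) rfl
  refine ⟨d, hd, fun v hv => ?_⟩
  rw [hsplit]
  have := hdsub v hv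
  simp only [mem_cons, mem_append] at this ⊢
  tauto

theorem exists_isCycleList_of_isChain_cons {x : V} {t : List V} (h : List.IsChain A (x :: t))
    (ht : t.getLast? = some x) : ∃ d, IsCycleList A d ∧ ∀ v ∈ d, v ∈ t := by
  rw [← dropLast_append_getLast? x ht] at h ⊢
  obtain ⟨d, hd, hdsub⟩ := exists_isCycleList_of_isChain h
  refine ⟨d, hd, fun v hv => ?_⟩
  rcases mem_cons.1 (hdsub v hv) with rfl | hv'
  · exact mem_append_right _ (mem_singleton_self _)
  · exact mem_append_left _ hv'

end CycleLists

section Walks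

variable {V : Type} {A : V → V → Prop}

def removeVertex (A : V → V → Prop) (v : V) (a b : V) : Prop := A a b ∧ a ≠ v ∧ b ≠ v

theorem isChain_removeVertex_iff {v x y : V} {l : List V} :
    List.IsChain (removeVertex A v) (x :: l ++ [y]) ↔
      List.IsChain A (x :: l ++ [y]) ∧ v ∉ x :: l ++ [y] := by
  induction l generalizing x with
  | nil => simp [removeVertex]; tauto
  | cons z l ih =>
    simp only [cons_append, isChain_cons_cons] at ih ⊢
    rw [ih]
    simp [removeVertex]
    tauto

theorem lt_of_isChain_of_forall_segment {ι : Type*} [Preorder ι] {c : ι → V}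
    (hseg : ∀ i j pre, (∀ v ∈ pre, v ∉ Set.range c) →
      List.IsChain A (c i :: pre ++ [c j]) → i < j)
    {i j : ι} {w : List V} (hw : List.IsChain A (c i :: w ++ [c j])) : i < j := by
  suffices ∀ w i pre, (∀ v ∈ pre, v ∉ Set.range c) →
      List.IsChain A (c i :: pre ++ w ++ [c j]) → i < j from this w i [] (by simp) hw
  intro w
  induction w with
  | nil => exact fun i pre hpre h => hseg i j pre hpre (by simpa using h)
  | cons v w ih =>
    intro i pre hpre h
    by_cases hv : v ∈ Set.range c
    · obtain ⟨m, rfl⟩ := hv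
      replace h : List.IsChain A (c i :: (pre ++ c m :: (w ++ [c j]))) := by simpa using h
      rw [isChain_cons_split] at h
      exact (hseg i m pre hpre h.1).trans (ih m [] (by simp) (by simpa using h.2))
    · refine ih i (pre ++ [v]) ?_ (by simpa using h)
      intro u hu
      rcases mem_append.1 hu with hu | hu
      exacts [hpre u hu, mem_singleton.1 hu ▸ hv]

end Walks

section OuterPaths

variable {V : Type} {A : V → V → Prop} {C : Set V} {carc : V → V → Prop}

theorem OuterPath.exists_eq_cons_append {p : List V} {u w : V}
    (h : OuterPath A C carc p u w) : ∃ mid, p = u :: mid ++ [w] := by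
  obtain ⟨hlen, hhead, hlast, -⟩ := h
  obtain ⟨x, t, rfl⟩ := exists_cons_of_length_pos (by omega : 0 < p.length)
  obtain rfl : x = u := by simpa using hhead
  have ht : t.getLast? = some w := by
    cases t with
    | nil => simp at hlen
    | cons _ _ => simpa using hlast
  exact ⟨t.dropLast, by rw [cons_append, dropLast_append_getLast? w ht]⟩

theorem outerPath_of_isChain (hcarc : ∀ a b, carc a b → a ∈ C ∧ b ∈ C) {x y : V}
    {pre : List V} (hx : x ∈ C) (hy : y ∈ C) (hpre : ∀ v ∈ pre, v ∉ C)
    (hA : List.IsChain A (x :: pre ++ [y])) (hxy : pre = [] → ¬ carc x y) :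
    OuterPath A C carc (x :: pre ++ [y]) x y := by
  refine ⟨by simp, rfl, getLast?_concat, hx, hy, hA, ?_, ?_⟩
  · intro v hv hvx hvy
    simp only [mem_append, mem_cons, not_mem_nil, or_false] at hv
    rcases hv with (rfl | hv) | rfl
    exacts [absurd rfl hvx, hpre v hv, absurd rfl hvy]
  · have hpairs : Forall₂ (fun a b => ¬ carc a b) (x :: pre) (pre ++ [y]) := by
      cases pre with
      | nil => simpa using hxy rfl
      | cons v pre =>
        refine Forall₂.cons (fun h => hpre v mem_cons_self (hcarc _ _ h).2) ?_
        exact forall₂_iff_zip.2 ⟨by simp,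
          fun hab h => hpre _ (of_mem_zip hab).1 (hcarc _ _ h).1⟩
    intro pr hpr
    have hzip : (x :: pre ++ [y]).zip (pre ++ [y]) = (x :: pre).zip (pre ++ [y]) := by
      simpa using
        zip_append (l₁ := x :: pre) (r₁ := [y]) (l₂ := pre ++ [y]) (r₂ := []) (by simp)
    rw [cons_append, tail_cons, ← cons_append, hzip] at hpr
    exact (forall₂_iff_zip.1 hpairs).2 hpr

end OuterPaths

theorem Fin.lt_add_one_of_add_one_ne_zero {L : ℕ} [NeZero L] {i : Fin L} (h : i + 1 ≠ 0) :
    i < i + 1 := by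
  obtain ⟨n, rfl⟩ := Nat.exists_eq_add_one_of_ne_zero (NeZero.ne L)
  rw [Fin.lt_add_one_iff, Fin.lt_last_iff_ne_last]
  rintro rfl
  exact h (Fin.last_add_one n)

section DirectedCycle

variable {V : Type} {A : V → V → Prop} {L : ℕ} [NeZero L] {c : Fin L → V}

def cycleArc (c : Fin L → V) (a b : V) : Prop := ∃ i, a = c i ∧ b = c (i + 1)

theorem lt_of_isChain_segment_of_not_backward (hc : Function.Injective c)
    (hback : ¬ ∃ (b e : Fin L) (p : List V), b ≠ 0 ∧ e ≠ 0 ∧ e ≤ b ∧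
      OuterPath A (Set.range c) (cycleArc c) p (c b) (c e))
    {i j : Fin L} {pre : List V} (hpre : ∀ v ∈ pre, v ∉ Set.range c)
    (h : List.IsChain (removeVertex A (c 0)) (c i :: pre ++ [c j])) : i < j := by
  obtain ⟨hA, h0⟩ := isChain_removeVertex_iff.1 h
  have hi : i ≠ 0 := by rintro rfl; simp at h0
  have hj : j ≠ 0 := by rintro rfl; simp at h0
  by_cases harc : pre = [] ∧ cycleArc c (c i) (c j)
  · obtain ⟨-, k, hik, hjk⟩ := harc
    obtain rfl := hc hik
    obtain rfl := hc hjk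
    exact Fin.lt_add_one_of_add_one_ne_zero hj
  · by_contra hji
    refine hback ⟨i, j, _, hi, hj, not_lt.1 hji,
      outerPath_of_isChain ?_ ⟨i, rfl⟩ ⟨j, rfl⟩ hpre hA fun hp ha => harc ⟨hp, ha⟩⟩
    rintro _ _ ⟨k, rfl, rfl⟩
    exact ⟨⟨k, rfl⟩, ⟨k + 1, rfl⟩⟩

open Fin.NatCast

-- `(k : Fin L)` is `k` reduced mod `L`, so the arc `c (L-1) → c 0` is covered as well.
theorem isChain_map_natCast_range' (hcyc : ∀ i, A (c i) (c (i + 1))) (s n : ℕ) :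
    List.IsChain A ((range' s n).map fun k : ℕ => c k) := by
  rw [isChain_map, range'_eq_map_range, isChain_map, isChain_range]
  intro m _
  simpa [Nat.cast_add, add_assoc] using hcyc ((s + m : ℕ) : Fin L)

theorem exists_closedWalk_of_backward_outerPath (hc : Function.Injective c)
    (hcyc : ∀ i, A (c i) (c (i + 1))) {b e : Fin L} (hb : b ≠ 0) (he : e ≠ 0) (heb : e ≤ b)
    {p : List V} (hp : OuterPath A (Set.range c) (cycleArc c) p (c b) (c e)) :
    ∃ t, List.IsChain A (c b :: t) ∧ t.getLast? = some (c b) ∧ c 0 ∉ t := by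
  obtain ⟨mid, rfl⟩ := hp.exists_eq_cons_append
  obtain ⟨-, -, -, -, -, hpc, hint, -⟩ := hp
  have h0p : c 0 ∉ c b :: mid ++ [c e] := fun h =>
    hint _ h (fun h' => hb (hc h').symm) (fun h' => he (hc h').symm) ⟨0, rfl⟩
  set arcs := (range' e (b - e + 1)).map fun k : ℕ => c k
  have harcs_head : arcs.head? = some (c e) := by simp [arcs, range'_succ]
  have harcs_last : arcs.getLast? = some (c b) := by
    simp [arcs, range'_concat, Nat.add_sub_cancel' (Fin.le_def.1 heb)]
  have harcs0 : c 0 ∉ arcs := by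
    simp only [arcs, mem_map, mem_range'_1, not_exists, not_and]
    rintro k ⟨hek, hkb⟩ hk0
    have hkL : k < L := by have := b.isLt; omega
    have : k = 0 := Nat.eq_zero_of_dvd_of_lt (Fin.natCast_eq_zero.1 (hc hk0)) hkL
    exact he (Fin.ext (by rw [Fin.val_zero]; omega))
  refine ⟨mid ++ arcs, ?_, ?_, ?_⟩
  · replace hpc : List.IsChain A ((c b :: mid) ++ [c e]) := hpc
    rw [isChain_append] at hpc
    rw [← cons_append, isChain_append]
    refine ⟨hpc.1, isChain_map_natCast_range' hcyc _ _, fun x hx y hy => ?_⟩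
    rw [harcs_head] at hy
    exact hpc.2.2 x hx y hy
  · rw [getLast?_append, harcs_last]; rfl
  · simp only [mem_append, not_or]
    exact ⟨fun h => h0p (by simp [h]), harcs0⟩

end DirectedCycle

theorem remove_vertex_cycle_iff_backward_outer_path_general {V : Type}
    (A : V → V → Prop) (L : ℕ) [NeZero L]
    (c : Fin L → V) (hc : Function.Injective c)
    (hcyc : ∀ i : Fin L, A (c i) (c (i + 1)))
    (hnodisj : ∀ d : List V, IsCycleList A d → ∃ i : Fin L, c i ∈ d) :
    (∃ d : List V, IsCycleList A d ∧ c 0 ∉ d) ↔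
    (∃ (b e : Fin L) (p : List V), b ≠ 0 ∧ e ≠ 0 ∧ e ≤ b ∧
      OuterPath A (Set.range c) (fun a' b' => ∃ i : Fin L, a' = c i ∧ b' = c (i + 1))
        p (c b) (c e)) := by
  constructor
  · rintro ⟨d, hd, hd0⟩
    by_contra hback
    obtain ⟨i, hi⟩ := hnodisj d hd
    obtain ⟨s, hs, hsd⟩ := hd.exists_isChain_of_mem hi
    have hwalk : List.IsChain (removeVertex A (c 0)) (c i :: s ++ [c i]) := by
      refine isChain_removeVertex_iff.2 ⟨hs, fun h => hd0 ?_⟩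
      simp only [mem_append, mem_cons, not_mem_nil, or_false] at h
      rcases h with (h | h) | h
      exacts [h ▸ hi, hsd _ h, h ▸ hi]
    exact lt_irrefl i <| lt_of_isChain_of_forall_segment
      (fun _ _ _ => lt_of_isChain_segment_of_not_backward hc hback) hwalk
  · rintro ⟨b, e, p, hb, he, heb, hp⟩
    obtain ⟨t, ht, hlast, ht0⟩ := exists_closedWalk_of_backward_outerPath hc hcyc hb he heb hp
    obtain ⟨d, hd, hdt⟩ := exists_isCycleList_of_isChain_cons ht hlast
    exact ⟨d, hd, fun h => ht0 (hdt _ h)⟩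

/-- Proposition 6: let `G` consist of a directed cycle `c 0 → c 1 → ⋯ → c (L-1) → c 0`
together with outer paths (every arc is a cycle arc or lies on an outer path), with
no cycle vertex-disjoint from `C₁`.  After removing vertex `c 0`, the remaining graph
contains a directed cycle iff there is an outer path from `c b` to `c e` with
`b, e ≠ 0` and `e ≤ b`. -/
theorem remove_vertex_cycle_iff_backward_outer_path {V : Type} [Fintype V]
    (A : V → V → Prop) (L : ℕ) [NeZero L] (hL : 2 ≤ L)
    (c : Fin L → V) (hc : Function.Injective c)
    (hcyc : ∀ i : Fin L, A (c i) (c (i + 1)))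
    (hstruct : ∀ a b : V, A a b →
      (∃ i : Fin L, a = c i ∧ b = c (i + 1)) ∨
      ∃ (p : List V) (u w : V),
        OuterPath A (Set.range c) (fun a' b' => ∃ i : Fin L, a' = c i ∧ b' = c (i + 1))
          p u w ∧ (a, b) ∈ p.zip p.tail)
    (hnodisj : ∀ d : List V, IsCycleList A d → ∃ i : Fin L, c i ∈ d) :
    (∃ d : List V, IsCycleList A d ∧ c 0 ∉ d) ↔
    (∃ (b e : Fin L) (p : List V), b ≠ 0 ∧ e ≠ 0 ∧ e ≤ b ∧
      OuterPath A (Set.range c) (fun a' b' => ∃ i : Fin L, a' = c i ∧ b' = c (i + 1))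
        p (c b) (c e)) :=
  remove_vertex_cycle_iff_backward_outer_path_general A L c hc hcyc hnodisj
end

section
/- For any directed graph G representing a unicast index-coding instance, the number of vertices in a maximum acyclic induced subgraph of G is a lower bound on the optimal index codelength: mais(G) ≤ r_{m^t}(G) for all message alphabet sizes m^t. -/
/-!
An index code is injective on the messages that are supported on an acyclic set `S` of
receivers (and fixed elsewhere): an acyclic induced subgraph always has a sink, whose receiver
knows all its side information in advance and hence decodes its message from the codeword
alone; peeling off sinks recovers every message in `S`. So `|X|^|S| ≤ |Y|^p`, i.e.
`|S| ≤ p · log |Y| / log |X|`.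
-/

/-- `enc` is (the encoder of) a valid index code of length `p` for the side-information
graph `A`: every receiver `i` can decode its message `x i` from the codeword and the
messages `x j` of its out-neighbours `j` (those with `A i j`). -/
def IsIndexCode {V : Type} [Fintype V] {X Y : Type} (A : V → V → Prop)
    (p : ℕ) (enc : (V → X) → Fin p → Y) : Prop :=
  ∀ i : V, ∃ dec : (Fin p → Y) → ({j : V // A i j} → X) → X,
    ∀ x : V → X, dec (enc x) (fun j => x j.1) = x i

/-- The optimal (normalised) index codelength `r_{|X|}(G)` for the side-information
graph `A` with message alphabet `X`: the infimum over all index codes of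
`p · log |Y| / log |X|`. -/
noncomputable def optLen (V : Type) [Fintype V] (A : V → V → Prop)
    (X : Type) [Fintype X] : ℝ :=
  sInf {ℓ : ℝ | ∃ (Y : Type) (inst : Fintype Y) (p : ℕ)
    (enc : (V → X) → Fin p → Y), 2 ≤ @Fintype.card Y inst ∧
    IsIndexCode A p enc ∧
    ℓ = (p * Real.log (@Fintype.card Y inst)) / Real.log (Fintype.card X)}
/-- The number of vertices of a maximum acyclic induced subgraph of `A`. -/
noncomputable def mais (V : Type) [Fintype V] (A : V → V → Prop) : ℕ :=
  sSup {k : ℕ | ∃ S : Finset V, ¬ HasCycleIn A ↑S ∧ k = S.card}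

open Function

section Cycles

variable {V : Type} {A : V → V → Prop} {S T : Set V}

theorem HasCycleIn.mono (h : HasCycleIn A S) (hST : S ⊆ T) : HasCycleIn A T :=
  let ⟨v, l, hnd, hmem, hch⟩ := h
  ⟨v, l, hnd, fun x hx => hST (hmem x hx), hch⟩

theorem not_hasCycleIn_empty : ¬HasCycleIn A ∅ :=
  fun ⟨v, _, _, hmem, _⟩ => hmem v List.mem_cons_self

theorem hasCycleIn_of_cycle {c : Cycle V} (hc : c ≠ Cycle.nil) (hnd : c.Nodup)
    (hch : c.Chain A) (hS : ∀ v ∈ c, v ∈ S) : HasCycleIn A S := by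
  induction c using Quotient.inductionOn' with | h l =>
  cases l with
  | nil => exact absurd rfl hc
  | cons v l =>
    exact ⟨v, l, Cycle.nodup_coe_iff.mp hnd, fun x hx => hS x (Cycle.mem_coe_iff.mpr hx),
      (Cycle.chain_coe_cons A v l).mp hch⟩

/-- Follow out-neighbours until a vertex repeats; the periodic orbit of that vertex is the
cycle. -/
theorem hasCycleIn_of_forall_exists_adj [Finite V] (hT : T.Nonempty)
    (h : ∀ v ∈ T, ∃ w ∈ T, A v w) : HasCycleIn A T := by
  choose! f hfT hfA using h
  obtain ⟨x, hx⟩ := hT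
  have hiter : ∀ n, f^[n] x ∈ T := fun n => Set.MapsTo.iterate hfT n hx
  obtain ⟨m, n, hmn, hfmn⟩ := (Set.toFinite T).exists_lt_map_eq_of_forall_mem hiter
  set y := f^[m] x
  have hy : y ∈ periodicPts f := by
    refine mk_mem_periodicPts (n := n - m) (by omega) ?_
    rw [IsPeriodicPt, IsFixedPt, ← iterate_add_apply, Nat.sub_add_cancel hmn.le, ← hfmn]
  have hyT : ∀ k, f^[k] y ∈ T := fun k => by rw [← iterate_add_apply]; exact hiter _
  refine hasCycleIn_of_cycle (c := periodicOrbit f y)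
    (periodicOrbit_eq_nil_iff_not_periodic_pt.not.mpr (not_not.mpr hy)) nodup_periodicOrbit
    ((periodicOrbit_chain' A hy).mpr fun k => ?_) fun v hv => ?_
  · rw [iterate_succ_apply']
    exact hfA _ (hyT k)
  · obtain ⟨k, rfl⟩ := (mem_periodicOrbit_iff hy).mp hv
    exact hyT k

theorem wellFounded_of_not_hasCycleIn [Finite V] (hS : ¬HasCycleIn A S) :
    WellFounded fun w v => w ∈ S ∧ A v w := by
  refine WellFounded.wellFounded_iff_has_min.mpr fun s hs => ?_
  by_contra! hmin
  obtain ⟨a, ha⟩ := hs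
  obtain ⟨b, hb, hbS, -⟩ := hmin a ha
  refine hS (HasCycleIn.mono (hasCycleIn_of_forall_exists_adj (T := s ∩ S) ⟨b, hb, hbS⟩ ?_)
    Set.inter_subset_right)
  rintro v ⟨hv, -⟩
  obtain ⟨w, hw, hwS, hvw⟩ := hmin v hv
  exact ⟨w, ⟨hw, hwS⟩, hvw⟩

end Cycles

section IndexCodes

variable {V X Y : Type} [Fintype V] {A : V → V → Prop} {p : ℕ}
  {enc : (V → X) → Fin p → Y}

theorem isIndexCode_uncoded (A : V → V → Prop) :
    IsIndexCode A (Fintype.card V) fun (x : V → X) k => x ((Fintype.equivFin V).symm k) :=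
  fun i => ⟨fun c _ => c (Fintype.equivFin V i), fun x => by simp⟩

theorem IsIndexCode.eq_of_encode_eq (hcode : IsIndexCode A p enc) {S : Set V}
    (hS : ¬HasCycleIn A S) {x y : V → X} (hxy : ∀ v ∉ S, x v = y v) (h : enc x = enc y) :
    x = y := by
  funext v
  induction v using (wellFounded_of_not_hasCycleIn hS).induction with | _ v ih =>
  obtain ⟨dec, hdec⟩ := hcode v
  have hnbr : (fun j : {j // A v j} => x j.1) = fun j => y j.1 := by
    funext ⟨j, hj⟩
    by_cases hjS : j ∈ S
    · exact ih j ⟨hjS, hj⟩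
    · exact hxy j hjS
  rw [← hdec x, ← hdec y, h, hnbr]

variable [Fintype X] [Fintype Y] [Nonempty X]

theorem IsIndexCode.card_pow_le (hcode : IsIndexCode A p enc) {S : Finset V}
    (hS : ¬HasCycleIn A S) : Fintype.card X ^ S.card ≤ Fintype.card Y ^ p := by
  classical
  let extend : (S → X) → V → X := fun g v =>
    if hv : v ∈ S then g ⟨v, hv⟩ else Classical.arbitrary X
  have hinj : Injective (enc ∘ extend) := by
    intro g g' h
    have hext := hcode.eq_of_encode_eq hS
      (fun v hv => by simp [extend, Finset.mem_coe.not.mp hv]) h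
    funext ⟨v, hv⟩
    simpa [extend, hv] using congrFun hext v
  simpa using Fintype.card_le_of_injective _ hinj

theorem IsIndexCode.card_mul_log_le (hcode : IsIndexCode A p enc) {S : Finset V}
    (hS : ¬HasCycleIn A S) :
    (S.card : ℝ) * Real.log (Fintype.card X) ≤ p * Real.log (Fintype.card Y) := by
  have hcard : (Fintype.card X : ℝ) ^ S.card ≤ (Fintype.card Y : ℝ) ^ p := by
    exact_mod_cast hcode.card_pow_le hS
  rw [← Real.log_pow, ← Real.log_pow]
  exact Real.log_le_log (by positivity) hcard

end IndexCodes

theorem exists_finset_not_hasCycleIn_card_eq_mais (V : Type) [Fintype V] (A : V → V → Prop) :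
    ∃ S : Finset V, ¬HasCycleIn A S ∧ S.card = mais V A := by
  set K := {k : ℕ | ∃ S : Finset V, ¬HasCycleIn A S ∧ k = S.card}
  have hK : K.Nonempty := ⟨0, ∅, by rw [Finset.coe_empty]; exact not_hasCycleIn_empty, rfl⟩
  have hbdd : BddAbove K := ⟨Fintype.card V, by rintro _ ⟨S, -, rfl⟩; exact S.card_le_univ⟩
  obtain ⟨S, hS, hcard⟩ := Nat.sSup_mem hK hbdd
  exact ⟨S, hS, hcard.symm⟩

/-- The MAIS lower bound: for any message alphabet of size `m^t`, the optimal index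
codelength is at least `mais(G)`. -/
theorem mais_le_optLen {V : Type} [Fintype V] (A : V → V → Prop)
    (X : Type) [Fintype X] (m t : ℕ) (hm : 2 ≤ m) (ht : 1 ≤ t)
    (hX : Fintype.card X = m ^ t) :
    (mais V A : ℝ) ≤ optLen V A X := by
  have hX2 : 2 ≤ Fintype.card X := hX ▸ hm.trans (le_self_pow (by omega) (by omega))
  have : Nonempty X := Fintype.card_pos_iff.mp (by omega)
  obtain ⟨S, hS, hcard⟩ := exists_finset_not_hasCycleIn_card_eq_mais V A
  refine le_csInf ⟨_, X, inferInstance, _, _, hX2, isIndexCode_uncoded A, rfl⟩ ?_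
  rintro _ ⟨Y, _, p, enc, -, hcode, rfl⟩
  rw [← hcard, le_div_iff₀ (Real.log_pos (by exact_mod_cast hX2))]
  exact hcode.card_mul_log_le hS
end

section
/- Let X₁,...,X₅ be independent uniform random variables over an alphabet of size 2^q bits each, and let Y be a random variable such that H(X₁ | Y, X₂, X₅) = 0, H(X₂ | Y, X₁, X₃) = 0, H(X₃ | Y, X₂, X₄) = 0, H(X₄ | Y, X₃, X₅) = 0, and H(X₅ | Y, X₄, X₁) = 0. Then H(Y) ≥ 2.5·q. -/
open Finset

/-- `prob μ Z s` is the probability that the random variable `Z` takes value `s`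
under the probability mass function `μ`. -/
noncomputable def prob {Ω : Type} [Fintype Ω] (μ : Ω → ℝ) {S : Type} [DecidableEq S]
    (Z : Ω → S) (s : S) : ℝ :=
  ∑ ω ∈ univ.filter (fun ω => Z ω = s), μ ω

/-- The Shannon entropy (in bits) of a finitely-valued random variable `Z`. -/
noncomputable def ent {Ω : Type} [Fintype Ω] (μ : Ω → ℝ) {S : Type} [Fintype S]
    [DecidableEq S] (Z : Ω → S) : ℝ :=
  - ∑ s : S, prob μ Z s * Real.logb 2 (prob μ Z s)

/-- Conditional entropy `H(Z | W) = H(Z, W) - H(W)`. -/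
noncomputable def condEnt {Ω : Type} [Fintype Ω] (μ : Ω → ℝ) {S T : Type}
    [Fintype S] [DecidableEq S] [Fintype T] [DecidableEq T]
    (Z : Ω → S) (W : Ω → T) : ℝ :=
  ent μ (fun ω => (Z ω, W ω)) - ent μ W

section Aux
variable {Ω : Type} [Fintype Ω] (μ : Ω → ℝ)

lemma prob_nonneg (hμ0 : ∀ ω, 0 ≤ μ ω) {S : Type} [DecidableEq S] (Z : Ω → S) (s : S) :
    0 ≤ prob μ Z s :=
  Finset.sum_nonneg fun ω _ => hμ0 ω

lemma sum_prob {S : Type} [Fintype S] [DecidableEq S] (Z : Ω → S) :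
    ∑ s : S, prob μ Z s = ∑ ω, μ ω := by
  unfold prob
  exact Finset.sum_fiberwise_of_maps_to (fun ω _ => mem_univ (Z ω)) μ

lemma prob_mono (hμ0 : ∀ ω, 0 ≤ μ ω) {S S' : Type} [DecidableEq S] [DecidableEq S']
    (Z : Ω → S) (W : Ω → S') (s : S) (t : S') (h : ∀ ω, Z ω = s → W ω = t) :
    prob μ Z s ≤ prob μ W t := by
  refine Finset.sum_le_sum_of_subset_of_nonneg ?_ fun ω _ _ => hμ0 ω
  intro ω hω
  simp only [mem_filter, mem_univ, true_and] at hω ⊢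
  exact h ω hω

lemma prob_comp {S S' : Type} [Fintype S] [DecidableEq S] [DecidableEq S']
    (J : Ω → S) (π : S → S') (t : S') :
    prob μ (fun ω => π (J ω)) t = ∑ s ∈ univ.filter (fun s => π s = t), prob μ J s := by
  unfold prob
  rw [← Finset.sum_fiberwise_of_maps_to
      (s := univ.filter (fun ω => π (J ω) = t)) (t := univ.filter (fun s => π s = t))
      (g := J) (fun ω hω => by
        simp only [mem_filter, mem_univ, true_and] at hω ⊢; exact hω) μ]
  refine Finset.sum_congr rfl fun s hs => ?_
  simp only [mem_filter, mem_univ, true_and] at hs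
  refine Finset.sum_congr ?_ fun _ _ => rfl
  ext ω
  simp only [mem_filter, mem_univ, true_and]
  constructor
  · rintro ⟨_, h2⟩; exact h2
  · intro h2; exact ⟨by rw [h2, hs], h2⟩

lemma ent_comp {S S' : Type} [Fintype S] [DecidableEq S] [Fintype S'] [DecidableEq S']
    (J : Ω → S) (π : S → S') :
    ent μ (fun ω => π (J ω))
      = - ∑ s : S, prob μ J s * Real.logb 2 (prob μ (fun ω => π (J ω)) (π s)) := by
  unfold ent
  congr 1
  rw [← Finset.sum_fiberwise_of_maps_to (s := (univ : Finset S)) (t := (univ : Finset S'))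
      (g := π) (fun s _ => mem_univ _)
      (fun s => prob μ J s * Real.logb 2 (prob μ (fun ω => π (J ω)) (π s)))]
  refine Finset.sum_congr rfl fun t _ => ?_
  rw [prob_comp μ J π t, Finset.sum_mul]
  refine Finset.sum_congr rfl fun s hs => ?_
  simp only [mem_filter, mem_univ, true_and] at hs
  rw [hs, ← prob_comp μ J π t]

lemma prob_eq_zero {S : Type} [DecidableEq S] (Z : Ω → S) (s : S)
    (h : ∀ ω, Z ω ≠ s) : prob μ Z s = 0 := by
  unfold prob
  rw [Finset.filter_false_of_mem (fun ω _ => h ω), Finset.sum_empty]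

lemma ent_congr {S S' : Type} [Fintype S] [DecidableEq S] [Fintype S'] [DecidableEq S']
    (Z : Ω → S) (W : Ω → S') (g : S → S') (g' : S' → S)
    (hg : ∀ ω, W ω = g (Z ω)) (hg' : ∀ ω, Z ω = g' (W ω)) :
    ent μ Z = ent μ W := by
  unfold ent
  congr 1
  rw [← Finset.sum_subset (Finset.subset_univ (univ.image Z))
      (fun s _ hs => by
        rw [prob_eq_zero μ Z s fun ω hω => hs (Finset.mem_image.2 ⟨ω, mem_univ ω, hω⟩)]
        simp),
      ← Finset.sum_subset (Finset.subset_univ (univ.image W))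
      (fun s _ hs => by
        rw [prob_eq_zero μ W s fun ω hω => hs (Finset.mem_image.2 ⟨ω, mem_univ ω, hω⟩)]
        simp)]
  refine Finset.sum_nbij' g g' ?_ ?_ ?_ ?_ ?_
  · rintro s hs
    rw [Finset.mem_image] at hs ⊢
    obtain ⟨ω, _, rfl⟩ := hs
    exact ⟨ω, mem_univ ω, hg ω⟩
  · rintro t ht
    rw [Finset.mem_image] at ht ⊢
    obtain ⟨ω, _, rfl⟩ := ht
    exact ⟨ω, mem_univ ω, hg' ω⟩
  · rintro s hs
    rw [Finset.mem_image] at hs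
    obtain ⟨ω, _, rfl⟩ := hs
    rw [← hg ω, ← hg' ω]
  · rintro t ht
    rw [Finset.mem_image] at ht
    obtain ⟨ω, _, rfl⟩ := ht
    rw [← hg' ω, ← hg ω]
  · rintro s hs
    rw [Finset.mem_image] at hs
    obtain ⟨ω, _, rfl⟩ := hs
    have hp : prob μ W (g (Z ω)) = prob μ Z (Z ω) := by
      unfold prob
      refine Finset.sum_congr ?_ fun _ _ => rfl
      ext ω'
      simp only [mem_filter, mem_univ, true_and]
      constructor
      · intro h
        rw [hg' ω', h, ← hg ω, ← hg' ω]
      · intro h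
        rw [hg ω', h]
    rw [hp]

lemma gibbs {S : Type} [Fintype S] (p r : S → ℝ)
    (hp : ∀ s, 0 ≤ p s) (hr : ∀ s, 0 ≤ r s) (hpr : ∀ s, p s ≠ 0 → r s ≠ 0)
    (hp1 : ∑ s, p s = 1) (hr1 : ∑ s, r s ≤ 1) :
    ∑ s, p s * Real.logb 2 (r s) ≤ ∑ s, p s * Real.logb 2 (p s) := by
  have hlog2 : (0:ℝ) < Real.log 2 := Real.log_pos one_lt_two
  have key : ∀ s, p s * Real.logb 2 (r s) - p s * Real.logb 2 (p s)
      ≤ (r s - p s) / Real.log 2 := by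
    intro s
    rcases eq_or_lt_of_le (hp s) with h0 | hpos
    · rw [← h0]
      simp only [zero_mul, sub_self, sub_zero]
      exact div_nonneg (hr s) hlog2.le
    · have hrpos : 0 < r s := lt_of_le_of_ne (hr s) (Ne.symm (hpr s hpos.ne'))
      have hlogb : Real.logb 2 (r s) - Real.logb 2 (p s)
          = Real.log (r s / p s) / Real.log 2 := by
        rw [Real.log_div hrpos.ne' hpos.ne', Real.logb, Real.logb]
        ring
      have hle : Real.log (r s / p s) ≤ r s / p s - 1 :=
        Real.log_le_sub_one_of_pos (by positivity)
      calc p s * Real.logb 2 (r s) - p s * Real.logb 2 (p s)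
          = p s * (Real.log (r s / p s) / Real.log 2) := by rw [← hlogb]; ring
        _ ≤ p s * ((r s / p s - 1) / Real.log 2) := by
            apply mul_le_mul_of_nonneg_left _ hpos.le
            exact div_le_div_of_nonneg_right hle hlog2.le
        _ = (r s - p s) / Real.log 2 := by
            field_simp
  have hA : ∑ s, (p s * Real.logb 2 (r s) - p s * Real.logb 2 (p s))
      ≤ ∑ s, (r s - p s) / Real.log 2 := Finset.sum_le_sum fun s _ => key s
  rw [Finset.sum_sub_distrib] at hA
  have hB : ∑ s, (r s - p s) / Real.log 2 ≤ 0 := by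
    rw [← Finset.sum_div]
    apply div_nonpos_of_nonpos_of_nonneg _ hlog2.le
    rw [Finset.sum_sub_distrib, hp1]
    linarith
  linarith

lemma ent_mono (hμ0 : ∀ ω, 0 ≤ μ ω) {A C : Type} [Fintype A] [DecidableEq A]
    [Fintype C] [DecidableEq C] (Z : Ω → A) (W : Ω → C) :
    ent μ W ≤ ent μ (fun ω => (Z ω, W ω)) := by
  have h1 : ent μ W = - ∑ s : A × C,
      prob μ (fun ω => (Z ω, W ω)) s * Real.logb 2 (prob μ W s.2) := by
    have := ent_comp μ (fun ω => (Z ω, W ω)) Prod.snd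
    exact this
  rw [h1]
  unfold ent
  apply neg_le_neg
  apply Finset.sum_le_sum
  intro s _
  rcases eq_or_lt_of_le (prob_nonneg μ hμ0 (fun ω => (Z ω, W ω)) s) with h0 | hpos
  · rw [← h0]
    simp
  · apply mul_le_mul_of_nonneg_left _ hpos.le
    have hle : prob μ (fun ω => (Z ω, W ω)) s ≤ prob μ W s.2 :=
      prob_mono μ hμ0 _ _ _ _ (fun ω h => by rw [← h])
    exact (Real.logb_le_logb one_lt_two hpos (lt_of_lt_of_le hpos hle)).mpr hle

lemma sum_filter_snd {A C : Type} [Fintype A] [Fintype C] [DecidableEq C]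
    (f : A × C → ℝ) (c : C) :
    ∑ p ∈ univ.filter (fun p : A × C => p.2 = c), f p = ∑ a : A, f (a, c) := by
  rw [Finset.sum_filter, Fintype.sum_prod_type]
  refine Finset.sum_congr rfl fun a _ => ?_
  simp

lemma prob_fst_marginal {A C : Type} [Fintype A] [DecidableEq A] [Fintype C] [DecidableEq C]
    (Z : Ω → A) (W : Ω → C) (c : C) :
    ∑ a : A, prob μ (fun ω => (Z ω, W ω)) (a, c) = prob μ W c := by
  have h : prob μ (fun ω => Prod.snd (Z ω, W ω)) c
      = ∑ p ∈ univ.filter (fun p : A × C => p.2 = c), prob μ (fun ω => (Z ω, W ω)) p :=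
    prob_comp μ (fun ω => (Z ω, W ω)) Prod.snd c
  rw [sum_filter_snd] at h
  exact h.symm

lemma ent_submod (hμ0 : ∀ ω, 0 ≤ μ ω) (hμ1 : ∑ ω, μ ω = 1) {A B C : Type}
    [Fintype A] [DecidableEq A] [Fintype B] [DecidableEq B] [Fintype C] [DecidableEq C]
    (Z : Ω → A) (V : Ω → B) (W : Ω → C) :
    ent μ (fun ω => (Z ω, V ω, W ω)) + ent μ W
      ≤ ent μ (fun ω => (Z ω, W ω)) + ent μ (fun ω => (V ω, W ω)) := by
  have hJ0 : ∀ s : A × B × C, 0 ≤ prob μ (fun ω => (Z ω, V ω, W ω)) s :=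
    fun s => prob_nonneg μ hμ0 _ s
  -- expansions of the four entropies over the triple space
  have eW : ent μ W = - ∑ s : A × B × C, prob μ (fun ω => (Z ω, V ω, W ω)) s
      * Real.logb 2 (prob μ W s.2.2) :=
    ent_comp μ (fun ω => (Z ω, V ω, W ω)) (fun s => s.2.2)
  have eZW : ent μ (fun ω => (Z ω, W ω)) = - ∑ s : A × B × C,
      prob μ (fun ω => (Z ω, V ω, W ω)) s
      * Real.logb 2 (prob μ (fun ω => (Z ω, W ω)) (s.1, s.2.2)) :=
    ent_comp μ (fun ω => (Z ω, V ω, W ω)) (fun s => (s.1, s.2.2))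
  have eVW : ent μ (fun ω => (V ω, W ω)) = - ∑ s : A × B × C,
      prob μ (fun ω => (Z ω, V ω, W ω)) s
      * Real.logb 2 (prob μ (fun ω => (V ω, W ω)) s.2) :=
    ent_comp μ (fun ω => (Z ω, V ω, W ω)) (fun s => s.2)
  rw [eW, eZW, eVW]
  unfold ent
  -- the auxiliary distribution r
  set p3 : A × B × C → ℝ := prob μ (fun ω => (Z ω, V ω, W ω)) with hp3
  set r : A × B × C → ℝ := fun s =>
    prob μ (fun ω => (Z ω, W ω)) (s.1, s.2.2) * prob μ (fun ω => (V ω, W ω)) s.2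
      / prob μ W s.2.2 with hr
  -- key pointwise bounds
  have hmZW : ∀ s : A × B × C, p3 s ≤ prob μ (fun ω => (Z ω, W ω)) (s.1, s.2.2) :=
    fun s => prob_mono μ hμ0 _ _ _ _ (fun ω h => by rw [← h])
  have hmVW : ∀ s : A × B × C, p3 s ≤ prob μ (fun ω => (V ω, W ω)) s.2 :=
    fun s => prob_mono μ hμ0 _ _ _ _ (fun ω h => by rw [← h])
  have hmW : ∀ s : A × B × C, p3 s ≤ prob μ W s.2.2 :=
    fun s => prob_mono μ hμ0 _ _ _ _ (fun ω h => by rw [← h])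
  -- Gibbs hypotheses
  have hrnn : ∀ s, 0 ≤ r s := fun s => by
    apply div_nonneg (mul_nonneg (prob_nonneg μ hμ0 _ _) (prob_nonneg μ hμ0 _ _))
      (prob_nonneg μ hμ0 _ _)
  have hpr : ∀ s, p3 s ≠ 0 → r s ≠ 0 := by
    intro s hs
    have hpos : 0 < p3 s := lt_of_le_of_ne (hJ0 s) (Ne.symm hs)
    have h1 : 0 < prob μ (fun ω => (Z ω, W ω)) (s.1, s.2.2) := lt_of_lt_of_le hpos (hmZW s)
    have h2 : 0 < prob μ (fun ω => (V ω, W ω)) s.2 := lt_of_lt_of_le hpos (hmVW s)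
    have h3 : 0 < prob μ W s.2.2 := lt_of_lt_of_le hpos (hmW s)
    have : 0 < r s := by
      rw [hr]
      exact div_pos (mul_pos h1 h2) h3
    exact this.ne'
  have hp1 : ∑ s, p3 s = 1 := by rw [hp3, sum_prob, hμ1]
  have hr1 : ∑ s, r s ≤ 1 := by
    have hstep : ∑ s : A × B × C, r s = ∑ c : C,
        prob μ W c * prob μ W c / prob μ W c := by
      rw [Fintype.sum_prod_type]
      have h1 : ∀ a : A, ∑ s : B × C, r (a, s) = ∑ c : C, ∑ b : B, r (a, (b, c)) := by
        intro a
        rw [Fintype.sum_prod_type]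
        exact Finset.sum_comm
      rw [Finset.sum_congr rfl fun a _ => h1 a, Finset.sum_comm]
      refine Finset.sum_congr rfl fun c _ => ?_
      have h2 : ∀ a : A, ∑ b : B, r (a, (b, c))
          = prob μ (fun ω => (Z ω, W ω)) (a, c)
            * (∑ b : B, prob μ (fun ω => (V ω, W ω)) (b, c)) / prob μ W c := by
        intro a
        rw [Finset.mul_sum, Finset.sum_div]
      rw [Finset.sum_congr rfl fun a _ => h2 a, ← Finset.sum_div, ← Finset.sum_mul,
        prob_fst_marginal μ Z W c, prob_fst_marginal μ V W c]
    rw [hstep]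
    have hle : ∀ c : C, prob μ W c * prob μ W c / prob μ W c ≤ prob μ W c := by
      intro c
      rcases eq_or_ne (prob μ W c) 0 with h | h
      · rw [h]; simp
      · rw [mul_div_assoc, div_self h, mul_one]
    calc ∑ c : C, prob μ W c * prob μ W c / prob μ W c
        ≤ ∑ c : C, prob μ W c := Finset.sum_le_sum fun c _ => hle c
      _ = 1 := by rw [sum_prob, hμ1]
  have hgibbs := gibbs p3 r hJ0 hrnn hpr hp1 hr1
  -- pointwise identification of logb r
  have hterm : ∀ s : A × B × C, p3 s * Real.logb 2 (r s)
      = p3 s * Real.logb 2 (prob μ (fun ω => (Z ω, W ω)) (s.1, s.2.2))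
        + p3 s * Real.logb 2 (prob μ (fun ω => (V ω, W ω)) s.2)
        - p3 s * Real.logb 2 (prob μ W s.2.2) := by
    intro s
    rcases eq_or_ne (p3 s) 0 with h | h
    · rw [h]; ring
    · have hpos : 0 < p3 s := lt_of_le_of_ne (hJ0 s) (Ne.symm h)
      have h1 : prob μ (fun ω => (Z ω, W ω)) (s.1, s.2.2) ≠ 0 :=
        (lt_of_lt_of_le hpos (hmZW s)).ne'
      have h2 : prob μ (fun ω => (V ω, W ω)) s.2 ≠ 0 :=
        (lt_of_lt_of_le hpos (hmVW s)).ne'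
      have h3 : prob μ W s.2.2 ≠ 0 := (lt_of_lt_of_le hpos (hmW s)).ne'
      rw [hr]
      simp only
      rw [Real.logb_div (mul_ne_zero h1 h2) h3, Real.logb_mul h1 h2]
      ring
  have hsum : ∑ s, p3 s * Real.logb 2 (r s)
      = ∑ s, p3 s * Real.logb 2 (prob μ (fun ω => (Z ω, W ω)) (s.1, s.2.2))
        + ∑ s, p3 s * Real.logb 2 (prob μ (fun ω => (V ω, W ω)) s.2)
        - ∑ s, p3 s * Real.logb 2 (prob μ W s.2.2) := by
    rw [← Finset.sum_add_distrib, ← Finset.sum_sub_distrib]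
    exact Finset.sum_congr rfl fun s _ => hterm s
  rw [hsum] at hgibbs
  linarith

lemma ent_unit (hμ1 : ∑ ω, μ ω = 1) : ent μ (fun _ : Ω => ()) = 0 := by
  unfold ent prob
  simp [hμ1]

lemma ent_subadd (hμ0 : ∀ ω, 0 ≤ μ ω) (hμ1 : ∑ ω, μ ω = 1) {A B : Type}
    [Fintype A] [DecidableEq A] [Fintype B] [DecidableEq B] (Z : Ω → A) (V : Ω → B) :
    ent μ (fun ω => (Z ω, V ω)) ≤ ent μ Z + ent μ V := by
  have h := ent_submod μ hμ0 hμ1 Z V (fun _ => ())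
  have e1 : ent μ (fun ω => (Z ω, V ω, ())) = ent μ (fun ω => (Z ω, V ω)) :=
    ent_congr μ _ _ (fun p => (p.1, p.2.1)) (fun p => (p.1, p.2, ()))
      (fun ω => rfl) (fun ω => rfl)
  have e2 : ent μ (fun ω => (Z ω, ())) = ent μ Z :=
    ent_congr μ _ _ (fun p => p.1) (fun a => (a, ())) (fun ω => rfl) (fun ω => rfl)
  have e3 : ent μ (fun ω => (V ω, ())) = ent μ V :=
    ent_congr μ _ _ (fun p => p.1) (fun a => (a, ())) (fun ω => rfl) (fun ω => rfl)
  rw [e1, e2, e3, ent_unit μ hμ1] at h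
  linarith

lemma ent_le_logb_card (hμ0 : ∀ ω, 0 ≤ μ ω) (hμ1 : ∑ ω, μ ω = 1) {A : Type}
    [Fintype A] [DecidableEq A] [Nonempty A] (Z : Ω → A) :
    ent μ Z ≤ Real.logb 2 (Fintype.card A) := by
  have hcard : (0:ℝ) < (Fintype.card A : ℝ) := by
    have := Fintype.card_pos (α := A)
    exact_mod_cast this
  have h := gibbs (prob μ Z) (fun _ => (Fintype.card A : ℝ)⁻¹)
    (fun s => prob_nonneg μ hμ0 Z s) (fun _ => by positivity)
    (fun s _ => by positivity)
    (by rw [sum_prob, hμ1])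
    (by
      rw [Finset.sum_const, Finset.card_univ, nsmul_eq_mul]
      rw [mul_inv_cancel₀ hcard.ne'])
  unfold ent
  have hsum : ∑ s, prob μ Z s * Real.logb 2 ((Fintype.card A : ℝ)⁻¹)
      = - Real.logb 2 (Fintype.card A) := by
    rw [← Finset.sum_mul, sum_prob, hμ1, one_mul, Real.logb_inv]
  linarith [h, hsum.symm.le]

lemma ent_uniform {A : Type} [Fintype A] [DecidableEq A] (Z : Ω → A)
    (hA : (0:ℝ) < (Fintype.card A : ℝ))
    (h : ∀ s, prob μ Z s = ((Fintype.card A : ℝ))⁻¹) :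
    ent μ Z = Real.logb 2 (Fintype.card A) := by
  unfold ent
  rw [Finset.sum_congr rfl (fun s _ => by rw [h s]), Finset.sum_const, Finset.card_univ,
    nsmul_eq_mul, Real.logb_inv]
  have : (Fintype.card A : ℝ) * ((Fintype.card A : ℝ))⁻¹ = 1 := mul_inv_cancel₀ hA.ne'
  calc -((Fintype.card A : ℝ) * (((Fintype.card A : ℝ))⁻¹ * -Real.logb 2 (Fintype.card A)))
      = ((Fintype.card A : ℝ) * ((Fintype.card A : ℝ))⁻¹) * Real.logb 2 (Fintype.card A) := by
        ring
    _ = Real.logb 2 (Fintype.card A) := by rw [this, one_mul]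

lemma decode_ext (hμ0 : ∀ ω, 0 ≤ μ ω) (hμ1 : ∑ ω, μ ω = 1) {A B C : Type}
    [Fintype A] [DecidableEq A] [Fintype B] [DecidableEq B] [Fintype C] [DecidableEq C]
    (Z : Ω → A) (V : Ω → B) (W : Ω → C)
    (h : ent μ (fun ω => (Z ω, W ω)) = ent μ W) :
    ent μ (fun ω => (Z ω, V ω, W ω)) = ent μ (fun ω => (V ω, W ω)) := by
  have h1 := ent_submod μ hμ0 hμ1 Z V W
  have h2 : ent μ (fun ω => (V ω, W ω)) ≤ ent μ (fun ω => (Z ω, V ω, W ω)) :=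
    ent_mono μ hμ0 Z (fun ω => (V ω, W ω))
  linarith

lemma ent_comm {A B : Type} [Fintype A] [DecidableEq A] [Fintype B] [DecidableEq B]
    (P : Ω → A) (Q : Ω → B) :
    ent μ (fun ω => (P ω, Q ω)) = ent μ (fun ω => (Q ω, P ω)) :=
  ent_congr μ _ _ (fun p => (p.2, p.1)) (fun p => (p.2, p.1)) (fun _ => rfl) (fun _ => rfl)

end Aux

/-- Lower bound for the undirected 5-cycle: if `X₁, …, X₅` are independent uniform
random variables over an alphabet of size `2^q` (so `q` bits each), and `Y` satisfies
the five decodability conditions `H(Xᵢ | Y, X_{i-1}, X_{i+1}) = 0` (indices mod 5),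
then `H(Y) ≥ 2.5 q`. -/
theorem five_cycle_entropy_bound {Ω F T : Type} [Fintype Ω] [Fintype F]
    [DecidableEq F] [Fintype T] [DecidableEq T]
    (μ : Ω → ℝ) (hμ0 : ∀ ω, 0 ≤ μ ω) (hμ1 : ∑ ω, μ ω = 1)
    (q : ℕ) (hF : Fintype.card F = 2 ^ q)
    (X : Fin 5 → Ω → F) (Y : Ω → T)
    (hunif : ∀ v : Fin 5 → F,
      ∑ ω ∈ univ.filter (fun ω => ∀ i, X i ω = v i), μ ω = ((2 ^ q : ℝ))⁻¹ ^ 5)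
    (h1 : condEnt μ (X 0) (fun ω => (Y ω, X 1 ω, X 4 ω)) = 0)
    (h2 : condEnt μ (X 1) (fun ω => (Y ω, X 0 ω, X 2 ω)) = 0)
    (h3 : condEnt μ (X 2) (fun ω => (Y ω, X 1 ω, X 3 ω)) = 0)
    (h4 : condEnt μ (X 3) (fun ω => (Y ω, X 2 ω, X 4 ω)) = 0)
    (h5 : condEnt μ (X 4) (fun ω => (Y ω, X 3 ω, X 0 ω)) = 0) :
    2.5 * q ≤ ent μ Y := by
  simp only [condEnt] at h1 h2 h3 h4 h5
  -- entropy of the full message tuple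
  have hXXprob : ∀ s : F × F × F × F × F,
      prob μ (fun ω => (X 0 ω, X 1 ω, X 2 ω, X 3 ω, X 4 ω)) s = ((2 ^ q : ℝ))⁻¹ ^ 5 := by
    rintro ⟨a, b, c, d, e⟩
    rw [← hunif ![a, b, c, d, e]]
    unfold prob
    refine Finset.sum_congr ?_ fun _ _ => rfl
    ext ω
    simp only [mem_filter, mem_univ, true_and, Prod.mk.injEq]
    constructor
    · rintro ⟨ha, hb, hc, hd, he⟩ i
      fin_cases i
      · exact ha
      · exact hb
      · exact hc
      · exact hd
      · exact he
    · intro h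
      exact ⟨h 0, h 1, h 2, h 3, h 4⟩
  have hcard5 : Fintype.card (F × F × F × F × F) = 2 ^ (5 * q) := by
    simp only [Fintype.card_prod, hF]
    ring
  have hpos5 : (0:ℝ) < ((Fintype.card (F × F × F × F × F) : ℕ) : ℝ) := by
    rw [hcard5]; positivity
  have hXXunif : ∀ s : F × F × F × F × F,
      prob μ (fun ω => (X 0 ω, X 1 ω, X 2 ω, X 3 ω, X 4 ω)) s
        = ((Fintype.card (F × F × F × F × F) : ℝ))⁻¹ := by
    intro s
    rw [hXXprob s, hcard5]
    push_cast
    rw [inv_pow, ← pow_mul, mul_comm q 5]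
  have hXXent : ent μ (fun ω => (X 0 ω, X 1 ω, X 2 ω, X 3 ω, X 4 ω)) = 5 * (q:ℝ) := by
    rw [ent_uniform μ _ hpos5 hXXunif, hcard5]
    push_cast
    rw [Real.logb_pow, Real.logb_self_eq_one one_lt_two]
    push_cast
    ring
  -- each message has at most q bits
  have hXi : ∀ i : Fin 5, ent μ (X i) ≤ (q:ℝ) := by
    intro i
    have hne : Nonempty F := Fintype.card_pos_iff.mp (by rw [hF]; positivity)
    have h := ent_le_logb_card μ hμ0 hμ1 (X i)
    rw [hF] at h
    refine h.trans ?_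
    push_cast
    rw [Real.logb_pow, Real.logb_self_eq_one one_lt_two]
    simp
  -- (D) subadditivity bounds
  have hD : ∀ i : Fin 5, ent μ (fun ω => (Y ω, X i ω)) ≤ ent μ Y + (q:ℝ) := by
    intro i
    have h := ent_subadd μ hμ0 hμ1 Y (X i)
    have := hXi i
    linarith
  -- (B) conditional-independence-breaking submodularities
  have hB : ∀ a b : Fin 5,
      ent μ (fun ω => (Y ω, X a ω, X b ω)) + ent μ Y
        ≤ ent μ (fun ω => (Y ω, X a ω)) + ent μ (fun ω => (Y ω, X b ω)) := by
    intro a b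
    have h := ent_submod μ hμ0 hμ1 (X a) (X b) Y
    have c1 : ent μ (fun ω => (X a ω, X b ω, Y ω)) = ent μ (fun ω => (Y ω, X a ω, X b ω)) :=
      ent_congr μ _ _ (fun p => (p.2.2, (p.1, p.2.1))) (fun p => (p.2.1, (p.2.2, p.1)))
        (fun _ => rfl) (fun _ => rfl)
    have c2 : ent μ (fun ω => (X a ω, Y ω)) = ent μ (fun ω => (Y ω, X a ω)) :=
      ent_comm μ _ _
    have c3 : ent μ (fun ω => (X b ω, Y ω)) = ent μ (fun ω => (Y ω, X b ω)) :=
      ent_comm μ _ _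
    linarith
  -- (A) submodularity conditioned on (Y, X 0)
  have hA : ent μ (fun ω => (Y ω, X 0 ω, X 1 ω, X 3 ω)) + ent μ (fun ω => (Y ω, X 0 ω))
      ≤ ent μ (fun ω => (Y ω, X 0 ω, X 1 ω)) + ent μ (fun ω => (Y ω, X 0 ω, X 3 ω)) := by
    have h : ent μ (fun ω => (X 1 ω, X 3 ω, (Y ω, X 0 ω))) + ent μ (fun ω => (Y ω, X 0 ω))
        ≤ ent μ (fun ω => (X 1 ω, (Y ω, X 0 ω))) + ent μ (fun ω => (X 3 ω, (Y ω, X 0 ω))) :=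
      ent_submod μ hμ0 hμ1 (X 1) (X 3) (fun ω => (Y ω, X 0 ω))
    have c1 : ent μ (fun ω => (X 1 ω, X 3 ω, (Y ω, X 0 ω)))
        = ent μ (fun ω => (Y ω, X 0 ω, X 1 ω, X 3 ω)) :=
      ent_congr μ _ _ (fun p => (p.2.2.1, (p.2.2.2, (p.1, p.2.1))))
        (fun p => (p.2.2.1, (p.2.2.2, (p.1, p.2.1)))) (fun _ => rfl) (fun _ => rfl)
    have c2 : ent μ (fun ω => (X 1 ω, (Y ω, X 0 ω))) = ent μ (fun ω => (Y ω, X 0 ω, X 1 ω)) :=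
      ent_congr μ _ _ (fun p => (p.2.1, (p.2.2, p.1))) (fun p => (p.2.2, (p.1, p.2.1)))
        (fun _ => rfl) (fun _ => rfl)
    have c3 : ent μ (fun ω => (X 3 ω, (Y ω, X 0 ω))) = ent μ (fun ω => (Y ω, X 0 ω, X 3 ω)) :=
      ent_congr μ _ _ (fun p => (p.2.1, (p.2.2, p.1))) (fun p => (p.2.2, (p.1, p.2.1)))
        (fun _ => rfl) (fun _ => rfl)
    linarith
  -- (E) key submodularity: H(Y,X02) + H(Y,X14) ≥ H(Y,Xall) + H(Y,X01)
  have hE : ent μ (fun ω => (Y ω, X 0 ω, X 1 ω, X 2 ω, X 3 ω, X 4 ω))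
        + ent μ (fun ω => (Y ω, X 0 ω, X 1 ω))
      ≤ ent μ (fun ω => (Y ω, X 0 ω, X 2 ω)) + ent μ (fun ω => (Y ω, X 1 ω, X 4 ω)) := by
    have h : ent μ (fun ω => (X 2 ω, X 4 ω, (Y ω, X 0 ω, X 1 ω)))
          + ent μ (fun ω => (Y ω, X 0 ω, X 1 ω))
        ≤ ent μ (fun ω => (X 2 ω, (Y ω, X 0 ω, X 1 ω)))
          + ent μ (fun ω => (X 4 ω, (Y ω, X 0 ω, X 1 ω))) :=
      ent_submod μ hμ0 hμ1 (X 2) (X 4) (fun ω => (Y ω, X 0 ω, X 1 ω))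
    have c0 : ent μ (fun ω => (X 2 ω, X 4 ω, (Y ω, X 0 ω, X 1 ω)))
        = ent μ (fun ω => (Y ω, X 0 ω, X 1 ω, X 2 ω, X 4 ω)) :=
      ent_congr μ _ _ (fun p => (p.2.2.1, (p.2.2.2.1, (p.2.2.2.2, (p.1, p.2.1)))))
        (fun q' => (q'.2.2.2.1, (q'.2.2.2.2, (q'.1, (q'.2.1, q'.2.2.1)))))
        (fun _ => rfl) (fun _ => rfl)
    have c2 : ent μ (fun ω => (X 2 ω, (Y ω, X 0 ω, X 1 ω)))
        = ent μ (fun ω => (Y ω, X 0 ω, X 1 ω, X 2 ω)) :=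
      ent_congr μ _ _ (fun p => (p.2.1, (p.2.2.1, (p.2.2.2, p.1))))
        (fun q' => (q'.2.2.2, (q'.1, (q'.2.1, q'.2.2.1)))) (fun _ => rfl) (fun _ => rfl)
    have c4 : ent μ (fun ω => (X 4 ω, (Y ω, X 0 ω, X 1 ω)))
        = ent μ (fun ω => (Y ω, X 0 ω, X 1 ω, X 4 ω)) :=
      ent_congr μ _ _ (fun p => (p.2.1, (p.2.2.1, (p.2.2.2, p.1))))
        (fun q' => (q'.2.2.2, (q'.1, (q'.2.1, q'.2.2.1)))) (fun _ => rfl) (fun _ => rfl)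
    -- decoding: X 1 from (Y, X 0, X 2)
    have hd2 : ent μ (fun ω => (X 1 ω, (Y ω, X 0 ω, X 2 ω)))
        = ent μ (fun ω => (Y ω, X 0 ω, X 2 ω)) := by linarith
    have c5 : ent μ (fun ω => (X 1 ω, (Y ω, X 0 ω, X 2 ω)))
        = ent μ (fun ω => (Y ω, X 0 ω, X 1 ω, X 2 ω)) :=
      ent_congr μ _ _ (fun p => (p.2.1, (p.2.2.1, (p.1, p.2.2.2))))
        (fun q' => (q'.2.2.1, (q'.1, (q'.2.1, q'.2.2.2)))) (fun _ => rfl) (fun _ => rfl)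
    -- decoding: X 0 from (Y, X 1, X 4)
    have hd1 : ent μ (fun ω => (X 0 ω, (Y ω, X 1 ω, X 4 ω)))
        = ent μ (fun ω => (Y ω, X 1 ω, X 4 ω)) := by linarith
    have c6 : ent μ (fun ω => (X 0 ω, (Y ω, X 1 ω, X 4 ω)))
        = ent μ (fun ω => (Y ω, X 0 ω, X 1 ω, X 4 ω)) :=
      ent_congr μ _ _ (fun p => (p.2.1, (p.1, (p.2.2.1, p.2.2.2))))
        (fun q' => (q'.2.1, (q'.1, (q'.2.2.1, q'.2.2.2)))) (fun _ => rfl) (fun _ => rfl)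
    -- decoding: X 3 from (Y, X 2, X 4), extended by (X 0, X 1)
    have hd4 : ent μ (fun ω => (X 3 ω, (Y ω, X 2 ω, X 4 ω)))
        = ent μ (fun ω => (Y ω, X 2 ω, X 4 ω)) := by linarith
    have h7 : ent μ (fun ω => (X 3 ω, (X 0 ω, X 1 ω), (Y ω, X 2 ω, X 4 ω)))
        = ent μ (fun ω => ((X 0 ω, X 1 ω), (Y ω, X 2 ω, X 4 ω))) :=
      decode_ext μ hμ0 hμ1 (X 3) (fun ω => (X 0 ω, X 1 ω)) (fun ω => (Y ω, X 2 ω, X 4 ω)) hd4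
    have c7 : ent μ (fun ω => ((X 0 ω, X 1 ω), (Y ω, X 2 ω, X 4 ω)))
        = ent μ (fun ω => (Y ω, X 0 ω, X 1 ω, X 2 ω, X 4 ω)) :=
      ent_congr μ _ _ (fun p => (p.2.1, (p.1.1, (p.1.2, (p.2.2.1, p.2.2.2)))))
        (fun q' => ((q'.2.1, q'.2.2.1), (q'.1, (q'.2.2.2.1, q'.2.2.2.2))))
        (fun _ => rfl) (fun _ => rfl)
    have c8 : ent μ (fun ω => (X 3 ω, (X 0 ω, X 1 ω), (Y ω, X 2 ω, X 4 ω)))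
        = ent μ (fun ω => (Y ω, X 0 ω, X 1 ω, X 2 ω, X 3 ω, X 4 ω)) :=
      ent_congr μ _ _
        (fun p => (p.2.2.1, (p.2.1.1, (p.2.1.2, (p.2.2.2.1, (p.1, p.2.2.2.2))))))
        (fun q' => (q'.2.2.2.2.1, ((q'.2.1, q'.2.2.1), (q'.1, (q'.2.2.2.1, q'.2.2.2.2.2)))))
        (fun _ => rfl) (fun _ => rfl)
    linarith
  -- H(Y, X013) = H(Y, Xall) via decoding 4 then 2
  have hT : ent μ (fun ω => (Y ω, X 0 ω, X 1 ω, X 3 ω))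
      = ent μ (fun ω => (Y ω, X 0 ω, X 1 ω, X 2 ω, X 3 ω, X 4 ω)) := by
    have hd5 : ent μ (fun ω => (X 4 ω, (Y ω, X 3 ω, X 0 ω)))
        = ent μ (fun ω => (Y ω, X 3 ω, X 0 ω)) := by linarith
    have s1 : ent μ (fun ω => (X 4 ω, X 1 ω, (Y ω, X 3 ω, X 0 ω)))
        = ent μ (fun ω => (X 1 ω, (Y ω, X 3 ω, X 0 ω))) :=
      decode_ext μ hμ0 hμ1 (X 4) (X 1) (fun ω => (Y ω, X 3 ω, X 0 ω)) hd5
    have c9 : ent μ (fun ω => (X 1 ω, (Y ω, X 3 ω, X 0 ω)))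
        = ent μ (fun ω => (Y ω, X 0 ω, X 1 ω, X 3 ω)) :=
      ent_congr μ _ _ (fun p => (p.2.1, (p.2.2.2, (p.1, p.2.2.1))))
        (fun q' => (q'.2.2.1, (q'.1, (q'.2.2.2, q'.2.1)))) (fun _ => rfl) (fun _ => rfl)
    have c10 : ent μ (fun ω => (X 4 ω, X 1 ω, (Y ω, X 3 ω, X 0 ω)))
        = ent μ (fun ω => (Y ω, X 0 ω, X 1 ω, X 3 ω, X 4 ω)) :=
      ent_congr μ _ _ (fun p => (p.2.2.1, (p.2.2.2.2, (p.2.1, (p.2.2.2.1, p.1)))))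
        (fun q' => (q'.2.2.2.2, (q'.2.2.1, (q'.1, (q'.2.2.2.1, q'.2.1)))))
        (fun _ => rfl) (fun _ => rfl)
    have hd3 : ent μ (fun ω => (X 2 ω, (Y ω, X 1 ω, X 3 ω)))
        = ent μ (fun ω => (Y ω, X 1 ω, X 3 ω)) := by linarith
    have s2 : ent μ (fun ω => (X 2 ω, (X 0 ω, X 4 ω), (Y ω, X 1 ω, X 3 ω)))
        = ent μ (fun ω => ((X 0 ω, X 4 ω), (Y ω, X 1 ω, X 3 ω))) :=
      decode_ext μ hμ0 hμ1 (X 2) (fun ω => (X 0 ω, X 4 ω)) (fun ω => (Y ω, X 1 ω, X 3 ω)) hd3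
    have c11 : ent μ (fun ω => ((X 0 ω, X 4 ω), (Y ω, X 1 ω, X 3 ω)))
        = ent μ (fun ω => (Y ω, X 0 ω, X 1 ω, X 3 ω, X 4 ω)) :=
      ent_congr μ _ _ (fun p => (p.2.1, (p.1.1, (p.2.2.1, (p.2.2.2, p.1.2)))))
        (fun q' => ((q'.2.1, q'.2.2.2.2), (q'.1, (q'.2.2.1, q'.2.2.2.1))))
        (fun _ => rfl) (fun _ => rfl)
    have c12 : ent μ (fun ω => (X 2 ω, (X 0 ω, X 4 ω), (Y ω, X 1 ω, X 3 ω)))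
        = ent μ (fun ω => (Y ω, X 0 ω, X 1 ω, X 2 ω, X 3 ω, X 4 ω)) :=
      ent_congr μ _ _
        (fun p => (p.2.2.1, (p.2.1.1, (p.2.2.2.1, (p.1, (p.2.2.2.2, p.2.1.2))))))
        (fun q' => (q'.2.2.2.1, ((q'.2.1, q'.2.2.2.2.2), (q'.1, (q'.2.2.1, q'.2.2.2.2.1)))))
        (fun _ => rfl) (fun _ => rfl)
    linarith
  -- full joint entropy at least 5q
  have hfull : ent μ (fun ω => (X 0 ω, X 1 ω, X 2 ω, X 3 ω, X 4 ω))
      ≤ ent μ (fun ω => (Y ω, X 0 ω, X 1 ω, X 2 ω, X 3 ω, X 4 ω)) :=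
    ent_mono μ hμ0 Y (fun ω => (X 0 ω, X 1 ω, X 2 ω, X 3 ω, X 4 ω))
  -- gather everything
  have d0 := hD 0
  have d1 := hD 1
  have d2 := hD 2
  have d3 := hD 3
  have d4 := hD 4
  have b1 := hB 0 2
  have b2 := hB 0 3
  have b3 := hB 1 4
  have h25 : (2.5 : ℝ) = 5 / 2 := by norm_num
  rw [h25]
  linarith [hXXent, hfull, hA, hE, hT, d0, d1, d2, d3, d4, b1, b2, b3]
end
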